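/- Let G be a finite group and ω a normalized 3-cocycle on G with values in ℂˣ. Let g, h, k ∈ Z(G) be central elements such that θ_u is a 2-coboundary on G for each u ∈ {g, h, k, gh, hk, ghk}, with a chosen trivialization τ_u for each such u. Define β(u,v)(m) := τ_u(m)·τ_v(m)·τ_{uv}(m)⁻¹·θ_m(u,v). Then β satisfies the 2-cocycle identity: for all m ∈ G, β(g,h)(m)·β(gh,k)(m) = β(h,k)(m)·β(g,hk)(m). -/

import Mathlib

/-!
Because `g` is central, `m ^ g = m`, so the twisted cocycle identity
`θ_m(x,y) θ_m(xy,z) = θ_{m^x}(y,z) θ_m(x,yz)`, which holds for any 3-cocycle `ω`, says that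
`(x, y) ↦ θ_m(x, y)` satisfies the plain 2-cocycle identity at `(g, h, k)`. In `β` the
trivializations only contribute the coboundary of `u ↦ τ_u(m)`, whose factors cancel.
-/

/-- Right conjugation `g^x = x⁻¹ * g * x`. -/
def groupConj {G : Type*} [Group G] (g x : G) : G := x⁻¹ * g * x

/-- `ω : G × G × G → ℂˣ` is a normalized multiplicative 3-cocycle. -/
def IsNormalized3Cocycle {G : Type*} [Group G] (ω : G → G → G → ℂˣ) : Prop :=
  (∀ a b c d : G, ω b c d * ω a (b * c) d * ω a b c = ω (a * b) c d * ω a b (c * d)) ∧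
  (∀ a b c : G, a = 1 ∨ b = 1 ∨ c = 1 → ω a b c = 1)

/-- `θ_g(x,y) = ω(g,x,y)·ω(x,y,g^{xy})·ω(x,g^x,y)⁻¹`. -/
def thetaDPR {G : Type*} [Group G] (ω : G → G → G → ℂˣ) (g x y : G) : ℂˣ :=
  ω g x y * ω x y (groupConj g (x * y)) * (ω x (groupConj g x) y)⁻¹

/-- `γ_x(a,b) = ω(a,b,x)·ω(x,a^x,b^x)·ω(a,x,b^x)⁻¹`. -/
def gammaDPR {G : Type*} [Group G] (ω : G → G → G → ℂˣ) (x a b : G) : ℂˣ :=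
  ω a b x * ω x (groupConj a x) (groupConj b x) * (ω a x (groupConj b x))⁻¹

section groupConj

variable {G : Type*} [Group G]

theorem mul_groupConj (g x : G) : x * groupConj g x = g * x := by
  simp [groupConj, mul_assoc]

theorem groupConj_mul (g x y : G) : groupConj g x * y = y * groupConj g (x * y) := by
  simp [groupConj, mul_assoc]

theorem groupConj_groupConj (g x y : G) : groupConj (groupConj g x) y = groupConj g (x * y) := by
  simp [groupConj, mul_assoc]

theorem groupConj_of_mem_center (g : G) {x : G} (hx : x ∈ Subgroup.center G) :
    groupConj g x = g := by
  rw [groupConj, mul_assoc, Subgroup.mem_center_iff.mp hx g, inv_mul_cancel_left]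

end groupConj

/-- In additive notation the identity is the alternating sum of the 3-cocycle identities at
`(g, x, y, z)`, `(x, g^x, y, z)`, `(x, y, g^{xy}, z)` and `(x, y, z, g^{xyz})`. -/
theorem thetaDPR_mul_thetaDPR {G : Type*} [Group G] {ω : G → G → G → ℂˣ}
    (hω : ∀ a b c d : G, ω b c d * ω a (b * c) d * ω a b c = ω (a * b) c d * ω a b (c * d))
    (g x y z : G) :
    thetaDPR ω g x y * thetaDPR ω g (x * y) z =
      thetaDPR ω (groupConj g x) y z * thetaDPR ω g x (y * z) := by
  have e₁ := congrArg Additive.ofMul (hω g x y z)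
  have e₂ := congrArg Additive.ofMul (hω x (groupConj g x) y z)
  have e₃ := congrArg Additive.ofMul (hω x y (groupConj g (x * y)) z)
  have e₄ := congrArg Additive.ofMul (hω x y z (groupConj g (x * y * z)))
  rw [mul_groupConj] at e₂
  rw [← groupConj_mul g x y, groupConj_mul g (x * y) z] at e₃
  apply Additive.ofMul.injective
  simp only [thetaDPR, groupConj_groupConj, ← mul_assoc, ofMul_mul, ofMul_inv] at e₁ e₂ e₃ e₄ ⊢
  linear_combination (norm := abel) e₁ - e₂ + e₃ - e₄

theorem beta_two_cocycle_general {G : Type*} [Group G]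
    (ω : G → G → G → ℂˣ) (hω : IsNormalized3Cocycle ω)
    (g h k : G) (hg : g ∈ Subgroup.center G)
    (τg τh τk τgh τhk τghk : G → ℂˣ) :
    ∀ m : G,
      (τg m * τh m * (τgh m)⁻¹ * thetaDPR ω m g h) *
          (τgh m * τk m * (τghk m)⁻¹ * thetaDPR ω m (g * h) k) =
        (τh m * τk m * (τhk m)⁻¹ * thetaDPR ω m h k) *
          (τg m * τhk m * (τghk m)⁻¹ * thetaDPR ω m g (h * k)) := by
  intro m
  have hθ : thetaDPR ω m g h * thetaDPR ω m (g * h) k =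
      thetaDPR ω m h k * thetaDPR ω m g (h * k) := by
    simpa only [groupConj_of_mem_center m hg] using thetaDPR_mul_thetaDPR hω.1 m g h k
  replace hθ := congrArg Additive.ofMul hθ
  apply Additive.ofMul.injective
  simp only [ofMul_mul, ofMul_inv] at hθ ⊢
  linear_combination (norm := abel) hθ

/-- The 2-cocycle identity for `β` on central elements. -/
theorem beta_two_cocycle {G : Type*} [Group G] [Finite G]
    (ω : G → G → G → ℂˣ) (hω : IsNormalized3Cocycle ω)
    (g h k : G) (hg : g ∈ Subgroup.center G) (hh : h ∈ Subgroup.center G)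
    (hk : k ∈ Subgroup.center G)
    (τg τh τk τgh τhk τghk : G → ℂˣ)
    (hτg : ∀ x y : G, thetaDPR ω g x y = τg x * τg y * (τg (x * y))⁻¹)
    (hτh : ∀ x y : G, thetaDPR ω h x y = τh x * τh y * (τh (x * y))⁻¹)
    (hτk : ∀ x y : G, thetaDPR ω k x y = τk x * τk y * (τk (x * y))⁻¹)
    (hτgh : ∀ x y : G, thetaDPR ω (g * h) x y = τgh x * τgh y * (τgh (x * y))⁻¹)
    (hτhk : ∀ x y : G, thetaDPR ω (h * k) x y = τhk x * τhk y * (τhk (x * y))⁻¹)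
    (hτghk : ∀ x y : G,
      thetaDPR ω (g * h * k) x y = τghk x * τghk y * (τghk (x * y))⁻¹) :
    ∀ m : G,
      (τg m * τh m * (τgh m)⁻¹ * thetaDPR ω m g h) *
          (τgh m * τk m * (τghk m)⁻¹ * thetaDPR ω m (g * h) k) =
        (τh m * τk m * (τhk m)⁻¹ * thetaDPR ω m h k) *
          (τg m * τhk m * (τghk m)⁻¹ * thetaDPR ω m g (h * k)) :=
  beta_two_cocycle_general ω hω g h k hg τg τh τk τgh τhk τghk
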